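/- Let (β_n) be a sequence of positive reals with n β_n log log n → ∞ and n β_n → 0 as n → ∞, and for x ≥ 0 set φ_n(x) = x/√(2 log n) + √(2 log n) − ( n β_n log log n + log log n + log log log n )/√(2 log n). Then for all fixed 0 ≤ y < x < ∞, max_{1 ≤ i ≤ n} | Q( i β_n/2 , φ_n(x)²/2 ) − Q( i β_n/2 , φ_n(y)²/2 ) | → 0 as n → ∞, where Q(a,z) = (1/Γ(a)) ∫_z^∞ t^{a−1} e^{−t} dt. -/

import Mathlib

open Filter Real

/-- The regularized upper incomplete Gamma function
`Q(a,z) = (1/Γ(a)) ∫_z^∞ t^(a-1) e^(-t) dt`. -/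
noncomputable def regIncGamma (a z : ℝ) : ℝ :=
  (1 / Real.Gamma a) * ∫ t in Set.Ioi z, t ^ (a - 1) * Real.exp (-t)

/-!
Since `n β_n → 0`, every shape parameter `a = i β_n / 2` with `i ≤ n` lies in `(0, 1]`, and for
large `n` the centering makes `φ_n(w) ≥ 2`, hence `φ_n(w)² / 2 ≥ 1`, for all `w ≥ 0`. For
`a ∈ (0, 1]` and `z ≥ 1` the integrand `t^(a-1) e^(-t)` is at most `e^(-t)`, and
`1 / Γ(a) = a / Γ(a + 1) ≤ e a`, so `0 ≤ Q(a, z) ≤ e a`. The maximum is therefore at most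
`e n β_n → 0`.
-/

open MeasureTheory

namespace Real

lemma exp_neg_one_le_Gamma_add_one {a : ℝ} (ha : 0 ≤ a) : exp (-1) ≤ Gamma (a + 1) := by
  have hint : IntegrableOn (fun t : ℝ => exp (-t) * t ^ (a + 1 - 1)) (Set.Ioi 0) :=
    GammaIntegral_convergent (by linarith)
  rw [Gamma_eq_integral (by linarith), ← integral_exp_neg_Ioi 1]
  calc ∫ t in Set.Ioi 1, exp (-t)
      ≤ ∫ t in Set.Ioi 1, exp (-t) * t ^ (a + 1 - 1) := by
        refine setIntegral_mono_on (integrableOn_exp_neg_Ioi 1)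
          (hint.mono_set (Set.Ioi_subset_Ioi zero_le_one)) measurableSet_Ioi fun t ht => ?_
        have : 1 ≤ t ^ (a + 1 - 1) := one_le_rpow (Set.mem_Ioi.1 ht).le (by linarith)
        nlinarith [exp_pos (-t)]
    _ ≤ ∫ t in Set.Ioi 0, exp (-t) * t ^ (a + 1 - 1) := by
        refine setIntegral_mono_set hint ?_
          (Set.Ioi_subset_Ioi zero_le_one).eventuallyLE
        filter_upwards [ae_restrict_mem measurableSet_Ioi] with t ht
        have : 0 < t := ht
        positivity

lemma one_div_Gamma_le {a : ℝ} (ha : 0 < a) : 1 / Gamma a ≤ exp 1 * a := by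
  have hΓ : exp (-1) ≤ a * Gamma a := Gamma_add_one ha.ne' ▸ exp_neg_one_le_Gamma_add_one ha.le
  rw [div_le_iff₀ (Gamma_pos_of_pos ha), exp_neg] at *
  rw [inv_le_iff_one_le_mul₀ (exp_pos 1)] at hΓ
  linarith

end Real

lemma setIntegral_rpow_mul_exp_neg_Ioi_le {a z : ℝ} (ha : 0 < a) (ha1 : a ≤ 1) (hz : 1 ≤ z) :
    ∫ t in Set.Ioi z, t ^ (a - 1) * exp (-t) ≤ exp (-z) := by
  have hint : IntegrableOn (fun t : ℝ => t ^ (a - 1) * exp (-t)) (Set.Ioi z) :=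
    ((GammaIntegral_convergent ha).mono_set (Set.Ioi_subset_Ioi (by linarith))).congr_fun
      (fun t _ => mul_comm _ _) measurableSet_Ioi
  rw [← integral_exp_neg_Ioi z]
  refine setIntegral_mono_on hint (integrableOn_exp_neg_Ioi z) measurableSet_Ioi
    fun t ht => ?_
  have : t ^ (a - 1) ≤ 1 := rpow_le_one_of_one_le_of_nonpos (hz.trans (Set.mem_Ioi.1 ht).le)
    (by linarith)
  nlinarith [exp_pos (-t)]

lemma regIncGamma_nonneg {a z : ℝ} (ha : 0 < a) (hz : 0 ≤ z) : 0 ≤ regIncGamma a z := by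
  have : 0 ≤ ∫ t in Set.Ioi z, t ^ (a - 1) * exp (-t) :=
    setIntegral_nonneg measurableSet_Ioi fun t ht => by
      have : 0 < t := hz.trans_lt ht
      positivity
  exact mul_nonneg (one_div_nonneg.2 (Gamma_pos_of_pos ha).le) this

lemma regIncGamma_le {a z : ℝ} (ha : 0 < a) (ha1 : a ≤ 1) (hz : 1 ≤ z) :
    regIncGamma a z ≤ exp 1 * a := by
  have hexp : exp (-z) ≤ 1 := exp_le_one_iff.2 (by linarith)
  calc regIncGamma a z ≤ 1 / Gamma a * 1 :=
        mul_le_mul_of_nonneg_left ((setIntegral_rpow_mul_exp_neg_Ioi_le ha ha1 hz).trans hexp)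
          (one_div_nonneg.2 (Gamma_pos_of_pos ha).le)
    _ ≤ exp 1 * a := by simpa using one_div_Gamma_le ha

lemma abs_regIncGamma_sub_le {a z w : ℝ} (ha : 0 < a) (ha1 : a ≤ 1) (hz : 1 ≤ z) (hw : 1 ≤ w) :
    |regIncGamma a z - regIncGamma a w| ≤ exp 1 * a :=
  abs_sub_le_of_nonneg_of_le (regIncGamma_nonneg ha (by linarith)) (regIncGamma_le ha ha1 hz)
    (regIncGamma_nonneg ha (by linarith)) (regIncGamma_le ha ha1 hw)

lemma two_le_add_sqrt_sub_div_sqrt {u c w : ℝ} (hu : 25 ≤ u) (hc : c ≤ 1) (hw : 0 ≤ w) :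
    2 ≤ w / √(2 * u) + √(2 * u) - (c * log u + log u + log (log u)) / √(2 * u) := by
  set r := √u
  have hr : 5 ≤ r := by
    rw [show (5 : ℝ) = √25 by rw [show (25 : ℝ) = 5 ^ 2 by norm_num, sqrt_sq (by norm_num)]]
    exact sqrt_le_sqrt hu
  have hs : √(2 * u) = √2 * r := sqrt_mul zero_le_two u
  have hs0 : 0 < √(2 * u) := sqrt_pos.2 (by linarith)
  have hsqrt2 : √2 ≤ 3 / 2 := by
    rw [sqrt_le_left (by norm_num)]; norm_num
  have hL0 : 0 ≤ log u := log_nonneg (by linarith)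
  have hL : log u ≤ 2 * r - 2 := by
    have := log_le_sub_one_of_pos (show 0 < r by linarith)
    rw [log_sqrt (by linarith)] at this
    linarith
  have hN : c * log u + log u + log (log u) ≤ 3 * log u := by
    nlinarith [log_le_self hL0]
  have hur : u = r ^ 2 := (sq_sqrt (by linarith)).symm
  have hNs : (c * log u + log u + log (log u)) / √(2 * u) ≤ √(2 * u) - 2 := by
    rw [div_le_iff₀ hs0, sub_mul, mul_self_sqrt (by linarith)]
    nlinarith
  linarith [div_nonneg hw hs0.le]

theorem uniform_negligibility_second_regime_general (β : ℕ → ℝ) (hβpos : ∀ n, 0 < β n)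
    (hβ2 : Tendsto (fun n : ℕ => (n : ℝ) * β n) atTop (nhds 0))
    (φ : ℕ → ℝ → ℝ)
    (hφ : ∀ n : ℕ, ∀ x : ℝ, 0 ≤ x →
      φ n x = x / Real.sqrt (2 * Real.log n) + Real.sqrt (2 * Real.log n)
        - ((n : ℝ) * β n * Real.log (Real.log n) + Real.log (Real.log n)
            + Real.log (Real.log (Real.log n))) / Real.sqrt (2 * Real.log n))
    (x y : ℝ) (hy : 0 ≤ y) (hxy : y < x) :
    Tendsto (fun n : ℕ =>
        ⨆ i ∈ Finset.Icc 1 n,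
          |regIncGamma ((i : ℝ) * β n / 2) (φ n x ^ 2 / 2)
            - regIncGamma ((i : ℝ) * β n / 2) (φ n y ^ 2 / 2)|)
      atTop (nhds 0) := by
  have hlarge : ∀ᶠ n : ℕ in atTop, 25 ≤ log n ∧ (n : ℝ) * β n ≤ 1 :=
    ((tendsto_log_atTop.comp tendsto_natCast_atTop_atTop).eventually_ge_atTop 25).and
      (hβ2.eventually_le_const one_pos)
  refine squeeze_zero' (g := fun n => exp 1 * (n * β n))
    (.of_forall fun n => Real.iSup_nonneg fun i => Real.iSup_nonneg fun _ => abs_nonneg _) ?_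
    (by simpa using hβ2.const_mul (exp 1))
  filter_upwards [hlarge] with n ⟨hn, hnβ⟩
  have hφ_large : ∀ w, 0 ≤ w → 1 ≤ φ n w ^ 2 / 2 := fun w hw => by
    have := two_le_add_sqrt_sub_div_sqrt hn hnβ hw
    rw [hφ n w hw]
    nlinarith
  have hbound : 0 ≤ exp 1 * (n * β n) := by have := hβpos n; positivity
  refine Real.iSup_le (fun i => Real.iSup_le (fun hi => ?_) hbound) hbound
  obtain ⟨hi1, hin⟩ := Finset.mem_Icc.1 hi
  have hiβ : (i : ℝ) * β n ≤ n * β n :=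
    mul_le_mul_of_nonneg_right (by exact_mod_cast hin) (hβpos n).le
  have ha : 0 < (i : ℝ) * β n / 2 := by
    have := hβpos n
    have : (1 : ℝ) ≤ i := by exact_mod_cast hi1
    positivity
  calc _ ≤ exp 1 * ((i : ℝ) * β n / 2) :=
        abs_regIncGamma_sub_le ha (by linarith) (hφ_large x (hy.trans hxy.le)) (hφ_large y hy)
    _ ≤ exp 1 * (n * β n) := by gcongr; linarith

/-- **Uniform negligibility in the regime `1/(n log log n) ≪ β ≪ 1/n`:**
`max_{1 ≤ i ≤ n} |Q(iβ_n/2, φ_n(x)²/2) − Q(iβ_n/2, φ_n(y)²/2)| → 0`. -/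
theorem uniform_negligibility_second_regime (β : ℕ → ℝ) (hβpos : ∀ n, 0 < β n)
    (hβ1 : Tendsto (fun n : ℕ => (n : ℝ) * β n * Real.log (Real.log n)) atTop atTop)
    (hβ2 : Tendsto (fun n : ℕ => (n : ℝ) * β n) atTop (nhds 0))
    (φ : ℕ → ℝ → ℝ)
    (hφ : ∀ n : ℕ, ∀ x : ℝ, 0 ≤ x →
      φ n x = x / Real.sqrt (2 * Real.log n) + Real.sqrt (2 * Real.log n)
        - ((n : ℝ) * β n * Real.log (Real.log n) + Real.log (Real.log n)
            + Real.log (Real.log (Real.log n))) / Real.sqrt (2 * Real.log n))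
    (x y : ℝ) (hy : 0 ≤ y) (hxy : y < x) :
    Tendsto (fun n : ℕ =>
        ⨆ i ∈ Finset.Icc 1 n,
          |regIncGamma ((i : ℝ) * β n / 2) (φ n x ^ 2 / 2)
            - regIncGamma ((i : ℝ) * β n / 2) (φ n y ^ 2 / 2)|)
      atTop (nhds 0) :=
  uniform_negligibility_second_regime_general β hβpos hβ2 φ hφ x y hy hxy
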